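/- arXiv:1007.1957 — 3 statements merged into one kernel-verified Lean document; each statement's English description precedes it below -/
import Mathlib

section
/- Let 1 ≤ q < ∞ and s ∈ ℝ with (s−1)q < −1. Then almost surely Σ_{n∈ℤ∖{0}} ⟨n⟩^{sq} |n|^{−q} |g_n|^q < ∞; that is, the Fourier–Wiener series u belongs almost surely to the Fourier–Lebesgue space 𝓕L^{s,q}(𝕋) (equivalently, to the modulation space M^{p,q}_s(𝕋) for every 1 ≤ p ≤ ∞). -/
open MeasureTheory ProbabilityTheory Filter

noncomputable section

/-- The family `(gₙ)_{n ∈ ℤ ∖ {0}}` is a family of independent standard complex-valued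
Gaussian random variables: writing `gₙ = aₙ + i bₙ`, all the real and imaginary parts
`aₙ, bₙ` (for `n ≠ 0`) are mutually independent standard real `N(0,1)` Gaussians. -/
def IsStdComplexGaussianFamily {Ω : Type*} [MeasurableSpace Ω] (P : Measure Ω)
    (g : ℤ → Ω → ℂ) : Prop :=
  iIndepFun (m := fun _ => (inferInstance : MeasurableSpace ℝ))
    (fun i : {n : ℤ // n ≠ 0} × Bool => fun ω =>
      if i.2 then (g (i.1 : ℤ) ω).re else (g (i.1 : ℤ) ω).im) P ∧
  ∀ i : {n : ℤ // n ≠ 0} × Bool,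
    P.map (fun ω => if i.2 then (g (i.1 : ℤ) ω).re else (g (i.1 : ℤ) ω).im)
      = gaussianReal 0 1

/-! By Tonelli, the expectation of the series is `∑ cₙ 𝔼‖gₙ‖^q` with
`cₙ = ⟨n⟩^{sq} |n|^{-q} ≤ 2^{|sq|/2} |n|^{(s-1)q}`, which is summable since `(s-1)q < -1`.
Convexity of `t ↦ t^q` gives `‖z‖^q ≤ 2^{q-1} (|Re z|^q + |Im z|^q)`, which bounds each
`𝔼‖gₙ‖^q` by the same Gaussian moment, so the series has finite expectation and is therefore
finite almost surely. -/

open scoped ENNReal NNReal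

lemma Real.rpow_le_rpow_abs_mul_rpow_of_mem_Icc {x y c : ℝ} (hx : 0 < x)
    (hy : y ∈ Set.Icc x (c * x)) (a : ℝ) : y ^ a ≤ c ^ |a| * x ^ a := by
  have hc : 1 ≤ c := le_of_mul_le_mul_right (by simpa using hy.1.trans hy.2) hx
  rcases le_total 0 a with ha | ha
  · calc y ^ a ≤ (c * x) ^ a := Real.rpow_le_rpow (hx.le.trans hy.1) hy.2 ha
      _ = c ^ |a| * x ^ a := by rw [abs_of_nonneg ha, Real.mul_rpow (by linarith) hx.le]
  · calc y ^ a ≤ x ^ a := Real.rpow_le_rpow_of_nonpos hx hy.1 ha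
      _ ≤ c ^ |a| * x ^ a :=
        le_mul_of_one_le_left (by positivity) (Real.one_le_rpow hc (abs_nonneg a))

lemma one_add_sq_rpow_le {n : ℤ} (hn : n ≠ 0) (a : ℝ) :
    (1 + (n : ℝ) ^ 2) ^ (a / 2) ≤ 2 ^ |a / 2| * |(n : ℝ)| ^ a := by
  have hn1 : (1 : ℝ) ≤ |(n : ℝ)| := by rw [← Int.cast_abs]; exact_mod_cast Int.one_le_abs hn
  have hsq : ((n : ℝ) ^ 2) ^ (a / 2) = |(n : ℝ)| ^ a := by
    rw [← sq_abs, ← Real.rpow_natCast, ← Real.rpow_mul (abs_nonneg _)]; ring_nf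
  rw [← hsq]
  refine Real.rpow_le_rpow_abs_mul_rpow_of_mem_Icc (by positivity) ⟨by linarith, ?_⟩ _
  nlinarith [sq_abs (n : ℝ)]

lemma summable_one_add_sq_rpow_mul_abs_rpow {a b : ℝ} (hab : a + b < -1) :
    Summable fun n : {n : ℤ // n ≠ 0} =>
      (1 + ((n : ℤ) : ℝ) ^ 2) ^ (a / 2) * |((n : ℤ) : ℝ)| ^ b := by
  have hsum : Summable fun n : ℤ => 2 ^ |a / 2| * |(n : ℝ)| ^ (a + b) := by
    simpa using (Real.summable_abs_int_rpow (b := -(a + b)) (by linarith)).mul_left (2 ^ |a / 2|)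
  refine (hsum.comp_injective Subtype.val_injective).of_nonneg_of_le (fun n => by positivity) ?_
  rintro ⟨n, hn⟩
  have hn' : (0 : ℝ) < |(n : ℝ)| := by positivity
  calc (1 + (n : ℝ) ^ 2) ^ (a / 2) * |(n : ℝ)| ^ b
      ≤ 2 ^ |a / 2| * |(n : ℝ)| ^ a * |(n : ℝ)| ^ b := by gcongr; exact one_add_sq_rpow_le hn a
    _ = 2 ^ |a / 2| * |(n : ℝ)| ^ (a + b) := by rw [mul_assoc, ← Real.rpow_add hn']

lemma ae_tsum_mul_lt_top {Ω ι : Type*} [MeasurableSpace Ω] {P : Measure Ω} [Countable ι]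
    {c : ι → ℝ≥0∞} (hc : ∑' i, c i ≠ ∞) {X : ι → Ω → ℝ≥0∞} (hX : ∀ i, AEMeasurable (X i) P)
    {M : ℝ≥0∞} (hM : M ≠ ∞) (hXM : ∀ i, ∫⁻ ω, X i ω ∂P ≤ M) :
    ∀ᵐ ω ∂P, ∑' i, c i * X i ω < ∞ := by
  have hcX : ∀ i, AEMeasurable (fun ω => c i * X i ω) P := fun i => (hX i).const_mul _
  refine ae_lt_top' (.tsum hcX) ?_
  rw [lintegral_tsum hcX]
  refine ne_top_of_le_ne_top (ENNReal.mul_ne_top hc hM) ?_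
  calc ∑' i, ∫⁻ ω, c i * X i ω ∂P = ∑' i, c i * ∫⁻ ω, X i ω ∂P := by
        simp_rw [lintegral_const_mul'' _ (hX _)]
    _ ≤ ∑' i, c i * M := by gcongr with i; exact hXM i
    _ = (∑' i, c i) * M := ENNReal.tsum_mul_right

lemma lintegral_enorm_rpow_gaussianReal_ne_top (μ : ℝ) (v : ℝ≥0) {q : ℝ} (hq : 0 < q) :
    ∫⁻ x, ‖x‖ₑ ^ q ∂gaussianReal μ v ≠ ∞ := by
  have h := lintegral_rpow_enorm_lt_top_of_eLpNorm_lt_top (by simpa using hq) ENNReal.ofReal_ne_top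
    (memLp_id_gaussianReal' (μ := μ) (v := v) _ ENNReal.ofReal_ne_top).eLpNorm_lt_top
  rw [ENNReal.toReal_ofReal hq.le] at h
  exact h.ne

lemma lintegral_enorm_rpow_le_re_im {Ω : Type*} [MeasurableSpace Ω] {P : Measure Ω} {Z : Ω → ℂ}
    (hre : AEMeasurable (fun ω => (Z ω).re) P) (him : AEMeasurable (fun ω => (Z ω).im) P)
    {q : ℝ} (hq : 1 ≤ q) :
    ∫⁻ ω, ‖Z ω‖ₑ ^ q ∂P ≤ 2 ^ (q - 1) * (∫⁻ x, ‖x‖ₑ ^ q ∂(P.map fun ω => (Z ω).re)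
      + ∫⁻ x, ‖x‖ₑ ^ q ∂(P.map fun ω => (Z ω).im)) := by
  have hmap {f : Ω → ℝ} (hf : AEMeasurable f P) :
      ∫⁻ x, ‖x‖ₑ ^ q ∂(P.map f) = ∫⁻ ω, ‖f ω‖ₑ ^ q ∂P :=
    lintegral_map' (by fun_prop) hf
  rw [hmap hre, hmap him, ← lintegral_add_left' (by fun_prop), ← lintegral_const_mul' _ _ (by simp)]
  refine lintegral_mono fun ω => ?_
  calc ‖Z ω‖ₑ ^ q ≤ (‖(Z ω).re‖ₑ + ‖(Z ω).im‖ₑ) ^ q := by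
        rw [← ofReal_norm, ← ofReal_norm, ← ofReal_norm,
          ← ENNReal.ofReal_add (norm_nonneg _) (norm_nonneg _)]
        gcongr
        exact Complex.norm_le_abs_re_add_abs_im _
    _ ≤ _ := ENNReal.rpow_add_le_mul_rpow_add_rpow _ _ hq

theorem brownian_in_FourierLebesgue_general
    {Ω : Type*} [MeasurableSpace Ω] (P : Measure Ω)
    (g : ℤ → Ω → ℂ) (hg : IsStdComplexGaussianFamily P g)
    (q s : ℝ) (hq : 1 ≤ q) (hsq : (s - 1) * q < -1) :
    ∀ᵐ ω ∂P,
      (∑' n : {n : ℤ // n ≠ 0},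
        ENNReal.ofReal
          ((1 + ((n : ℤ) : ℝ) ^ 2) ^ (s * q / 2) * |((n : ℤ) : ℝ)| ^ (-q)
            * ‖g (n : ℤ) ω‖ ^ q)) < ⊤ := by
  have hre (n : {n : ℤ // n ≠ 0}) : P.map (fun ω => (g n ω).re) = gaussianReal 0 1 :=
    hg.2 (n, true)
  have him (n : {n : ℤ // n ≠ 0}) : P.map (fun ω => (g n ω).im) = gaussianReal 0 1 :=
    hg.2 (n, false)
  have hre_meas (n : {n : ℤ // n ≠ 0}) : AEMeasurable (fun ω => (g n ω).re) P :=
    .of_map_ne_zero (hre n ▸ IsProbabilityMeasure.ne_zero _)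
  have him_meas (n : {n : ℤ // n ≠ 0}) : AEMeasurable (fun ω => (g n ω).im) P :=
    .of_map_ne_zero (him n ▸ IsProbabilityMeasure.ne_zero _)
  set M := ∫⁻ x, ‖x‖ₑ ^ q ∂gaussianReal 0 1
  have hM : M ≠ ∞ := lintegral_enorm_rpow_gaussianReal_ne_top 0 1 (by linarith)
  have hmoment (n : {n : ℤ // n ≠ 0}) : ∫⁻ ω, ‖g n ω‖ₑ ^ q ∂P ≤ 2 ^ (q - 1) * (M + M) := by
    simpa only [hre, him] using lintegral_enorm_rpow_le_re_im (hre_meas n) (him_meas n) hq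
  have hweights :=
    (summable_one_add_sq_rpow_mul_abs_rpow (a := s * q) (b := -q) (by linarith)).tsum_ofReal_ne_top
  filter_upwards [ae_tsum_mul_lt_top hweights
    (fun n => (aemeasurable_of_re_im (hre_meas n) (him_meas n)).enorm.pow_const q)
    (by finiteness) hmoment] with ω hω
  convert hω using 3 with n
  rw [ENNReal.ofReal_mul (by positivity), ← ofReal_norm,
    ENNReal.ofReal_rpow_of_nonneg (norm_nonneg _) (by linarith)]

/-- If `1 ≤ q < ∞` and `(s-1)q < -1`, then almost surely
`Σ_{n ≠ 0} ⟨n⟩^{sq} |n|^{-q} |gₙ|^q < ∞`, i.e. the Fourier–Wiener series belongs a.s.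
to `𝓕L^{s,q}(𝕋) = M^{p,q}_s(𝕋)`. -/
theorem brownian_in_FourierLebesgue
    {Ω : Type*} [MeasurableSpace Ω] (P : Measure Ω) [IsProbabilityMeasure P]
    (g : ℤ → Ω → ℂ) (hg : IsStdComplexGaussianFamily P g)
    (q s : ℝ) (hq : 1 ≤ q) (hsq : (s - 1) * q < -1) :
    ∀ᵐ ω ∂P,
      (∑' n : {n : ℤ // n ≠ 0},
        ENNReal.ofReal
          ((1 + ((n : ℤ) : ℝ) ^ 2) ^ (s * q / 2) * |((n : ℤ) : ℝ)| ^ (-q)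
            * ‖g (n : ℤ) ω‖ ^ q)) < ⊤ :=
  brownian_in_FourierLebesgue_general P g hg q s hq hsq
end
end

section
/- Let 1 ≤ q < ∞ and s ∈ ℝ with (s−1)q ≥ −1. Then almost surely Σ_{n∈ℤ∖{0}} ⟨n⟩^{sq} |n|^{−q} |g_n|^q = ∞; that is, the Fourier–Wiener series u almost surely does not belong to the Fourier–Lebesgue space 𝓕L^{s,q}(𝕋) (equivalently, to M^{p,q}_s(𝕋) for any 1 ≤ p ≤ ∞). -/
open MeasureTheory ProbabilityTheory Filter

noncomputable section

/-!
Only the terms with `n = k + 1 ≥ 1` are needed. Since `1 + n² ≤ 2n²` and `(s - 1) q ≥ -1`,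
`⟨n⟩^{sq} n^{-q} ≥ κ / n` with `κ = min 1 2^{sq/2}`, so the `n`-th term dominates
`Xₖ = κ/n · min(|Re gₙ|^q, 1)`. The `Xₖ` are independent, `[0, 1]`-valued, with means `κ μ₀ / n`
where `μ₀ = 𝔼 min(|Z|^q, 1) > 0` for `Z ~ N(0, 1)`, so their expected partial sums diverge.
The Chernoff bound `P(S_N ≤ M) ≤ e^M ∏ 𝔼 e^{-Xₖ} ≤ exp(M - 𝔼 S_N / 2)`, from `e^{-x} ≤ 1 - x/2`
on `[0, 1]`, then shows that `∑ Xₖ` diverges almost surely.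
-/

lemma Real.exp_neg_le_one_sub_half {x : ℝ} (h0 : 0 ≤ x) (h1 : x ≤ 1) :
    Real.exp (-x) ≤ 1 - x / 2 := by
  have hmul : Real.exp (-x) * Real.exp x = 1 := by rw [← Real.exp_add]; simp
  nlinarith [mul_le_mul_of_nonneg_left (Real.add_one_le_exp x) (Real.exp_pos (-x)).le]

section UnitIntervalValued

variable {Ω : Type*} [MeasurableSpace Ω] {P : Measure Ω}

lemma integrable_of_nonneg_of_le_one {X : Ω → ℝ} [IsFiniteMeasure P] (hX : AEMeasurable X P)
    (h0 : ∀ ω, 0 ≤ X ω) (h1 : ∀ ω, X ω ≤ 1) : Integrable X P :=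
  (integrable_const (1 : ℝ)).mono' hX.aestronglyMeasurable
    (ae_of_all _ fun ω => by rw [Real.norm_of_nonneg (h0 ω)]; exact h1 ω)

lemma mgf_neg_one_le_exp_neg_half_integral [IsProbabilityMeasure P] {X : Ω → ℝ}
    (hX : AEMeasurable X P) (h0 : ∀ ω, 0 ≤ X ω) (h1 : ∀ ω, X ω ≤ 1) :
    mgf X P (-1) ≤ Real.exp (-(P[X] / 2)) := by
  have hXint := integrable_of_nonneg_of_le_one hX h0 h1
  have hexp_int : Integrable (fun ω => Real.exp (-1 * X ω)) P :=
    integrable_of_nonneg_of_le_one (by fun_prop) (fun _ => (Real.exp_pos _).le)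
      fun ω => Real.exp_le_one_iff.2 (by linarith [h0 ω])
  calc mgf X P (-1) = ∫ ω, Real.exp (-1 * X ω) ∂P := rfl
    _ ≤ ∫ ω, (1 - X ω / 2) ∂P :=
        integral_mono hexp_int ((integrable_const 1).sub (hXint.div_const 2))
          fun ω => by simpa only [neg_one_mul] using Real.exp_neg_le_one_sub_half (h0 ω) (h1 ω)
    _ = 1 - P[X] / 2 := by
        rw [integral_sub (integrable_const 1) (hXint.div_const 2), integral_div]; simp
    _ ≤ Real.exp (-(P[X] / 2)) := Real.one_sub_le_exp_neg _

variable {X : ℕ → Ω → ℝ}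

lemma measureReal_sum_range_le_le_exp (hindep : iIndepFun X P)
    (hmeas : ∀ k, AEMeasurable (X k) P) (h0 : ∀ k ω, 0 ≤ X k ω) (h1 : ∀ k ω, X k ω ≤ 1)
    (M : ℝ) (N : ℕ) :
    P.real {ω | (∑ k ∈ Finset.range N, X k) ω ≤ M}
      ≤ Real.exp (M - (∑ k ∈ Finset.range N, P[X k]) / 2) := by
  have := hindep.isProbabilityMeasure
  have hS0 : ∀ ω, 0 ≤ (∑ k ∈ Finset.range N, X k) ω := fun ω => by
    rw [Finset.sum_apply]; exact Finset.sum_nonneg fun k _ => h0 k ω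
  have hexp_int : Integrable (fun ω => Real.exp (-1 * (∑ k ∈ Finset.range N, X k) ω)) P :=
    integrable_of_nonneg_of_le_one (by fun_prop) (fun _ => (Real.exp_pos _).le)
      fun ω => Real.exp_le_one_iff.2 (by linarith [hS0 ω])
  calc P.real {ω | (∑ k ∈ Finset.range N, X k) ω ≤ M}
      ≤ Real.exp (-(-1) * M) * mgf (∑ k ∈ Finset.range N, X k) P (-1) :=
        measure_le_le_exp_mul_mgf M (by norm_num) hexp_int
    _ = Real.exp M * ∏ k ∈ Finset.range N, mgf (X k) P (-1) := by
        rw [hindep.mgf_sum₀ hmeas, neg_neg, one_mul]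
    _ ≤ Real.exp M * ∏ k ∈ Finset.range N, Real.exp (-(P[X k] / 2)) := by
        gcongr with k
        · exact fun k _ => mgf_nonneg
        · exact mgf_neg_one_le_exp_neg_half_integral (hmeas k) (h0 k) (h1 k)
    _ = Real.exp (M - (∑ k ∈ Finset.range N, P[X k]) / 2) := by
        rw [← Real.exp_sum, ← Real.exp_add, Finset.sum_neg_distrib, Finset.sum_div, sub_eq_add_neg]

theorem ae_tsum_ofReal_eq_top_of_iIndepFun (hindep : iIndepFun X P)
    (hmeas : ∀ k, AEMeasurable (X k) P) (h0 : ∀ k ω, 0 ≤ X k ω) (h1 : ∀ k ω, X k ω ≤ 1)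
    (hdiv : Tendsto (fun N => ∑ k ∈ Finset.range N, P[X k]) atTop atTop) :
    ∀ᵐ ω ∂P, ∑' k, ENNReal.ofReal (X k ω) = ⊤ := by
  have := hindep.isProbabilityMeasure
  have hnull : ∀ M : ℕ, P {ω | ∑' k, ENNReal.ofReal (X k ω) ≤ M} = 0 := by
    intro M
    have hsub : ∀ N, {ω | ∑' k, ENNReal.ofReal (X k ω) ≤ M}
        ⊆ {ω | (∑ k ∈ Finset.range N, X k) ω ≤ M} := by
      intro N ω hω
      have : ENNReal.ofReal ((∑ k ∈ Finset.range N, X k) ω) ≤ M := by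
        rw [Finset.sum_apply, ENNReal.ofReal_sum_of_nonneg fun k _ => h0 k ω]
        exact (ENNReal.sum_le_tsum _).trans hω
      simpa using this
    have hbound : Tendsto (fun N => Real.exp (M - (∑ k ∈ Finset.range N, P[X k]) / 2))
        atTop (nhds 0) :=
      Real.tendsto_exp_atBot.comp <| tendsto_atBot_add_const_left _ _ <|
        tendsto_neg_atTop_atBot.comp (hdiv.atTop_div_const two_pos) |>.congr fun N => by
          simp
    rw [← measureReal_eq_zero_iff]
    refine le_antisymm (ge_of_tendsto' hbound fun N => ?_) measureReal_nonneg
    exact (measureReal_mono (hsub N)).trans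
      (measureReal_sum_range_le_le_exp hindep hmeas h0 h1 M N)
  filter_upwards [ae_all_iff.2 fun M => measure_eq_zero_iff_ae_notMem.1 (hnull M)] with ω hω
  by_contra hfin
  obtain ⟨M, hM⟩ := ENNReal.exists_nat_gt hfin
  exact hω M hM.le

end UnitIntervalValued

lemma integral_min_abs_rpow_one_pos {ν : Measure ℝ} [IsProbabilityMeasure ν] (hν : ν {0} = 0)
    (q : ℝ) : 0 < ∫ x, min (|x| ^ q) 1 ∂ν := by
  have hnonneg : ∀ x : ℝ, 0 ≤ min (|x| ^ q) 1 := fun x => le_min (by positivity) zero_le_one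
  have hint : Integrable (fun x : ℝ => min (|x| ^ q) 1) ν :=
    integrable_of_nonneg_of_le_one (Measurable.aemeasurable (by fun_prop)) hnonneg
      fun _ => min_le_right _ _
  have hsupp : ({0}ᶜ : Set ℝ) ⊆ Function.support fun x : ℝ => min (|x| ^ q) 1 :=
    fun x hx => (lt_min (Real.rpow_pos_of_pos (abs_pos.2 hx) q) one_pos).ne'
  rw [integral_pos_iff_support_of_nonneg hnonneg hint]
  refine lt_of_lt_of_le ?_ (measure_mono hsupp)
  rw [measure_compl (measurableSet_singleton 0) (measure_ne_top _ _), hν]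
  simp

lemma min_one_two_rpow_mul_rpow_le_one_add_sq_rpow (t : ℝ) {x : ℝ} (hx : 1 ≤ x) :
    min 1 ((2 : ℝ) ^ (t / 2)) * x ^ t ≤ (1 + x ^ 2) ^ (t / 2) := by
  have hx0 : 0 < x := by linarith
  have hxt : x ^ t = (x ^ 2) ^ (t / 2) := by
    rw [← Real.rpow_natCast x 2, ← Real.rpow_mul hx0.le]; ring_nf
  rcases le_or_gt 0 t with ht | ht
  · calc min 1 (2 ^ (t / 2)) * x ^ t ≤ 1 * (x ^ 2) ^ (t / 2) := by
          rw [hxt]; gcongr; exact min_le_left _ _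
      _ ≤ (1 + x ^ 2) ^ (t / 2) := by rw [one_mul]; gcongr; linarith
  · calc min 1 (2 ^ (t / 2)) * x ^ t ≤ 2 ^ (t / 2) * (x ^ 2) ^ (t / 2) := by
          rw [hxt]; gcongr; exact min_le_right _ _
      _ = (2 * x ^ 2) ^ (t / 2) := (Real.mul_rpow (by norm_num) (by positivity)).symm
      _ ≤ (1 + x ^ 2) ^ (t / 2) :=
          Real.rpow_le_rpow_of_nonpos (by positivity) (by nlinarith) (by linarith)

lemma min_one_two_rpow_div_le_one_add_sq_rpow_mul_rpow_neg {q s x : ℝ}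
    (hsq : -1 ≤ (s - 1) * q) (hx : 1 ≤ x) :
    min 1 ((2 : ℝ) ^ (s * q / 2)) / x ≤ (1 + x ^ 2) ^ (s * q / 2) * x ^ (-q) := by
  have hx0 : 0 < x := by linarith
  set κ := min 1 ((2 : ℝ) ^ (s * q / 2))
  have hκ : 0 ≤ κ := le_min zero_le_one (by positivity)
  calc κ / x = κ * x ^ (-1 : ℝ) := by rw [Real.rpow_neg_one]; ring
    _ ≤ κ * x ^ (s * q + -q) := by
        gcongr
        linarith
    _ = κ * x ^ (s * q) * x ^ (-q) := by
        rw [Real.rpow_add hx0]; ring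
    _ ≤ (1 + x ^ 2) ^ (s * q / 2) * x ^ (-q) := by
        gcongr; exact min_one_two_rpow_mul_rpow_le_one_add_sq_rpow _ hx

lemma div_mul_min_abs_re_rpow_le {q s x : ℝ} (hq : 0 ≤ q) (hsq : -1 ≤ (s - 1) * q)
    (hx : 1 ≤ x) (z : ℂ) :
    min 1 ((2 : ℝ) ^ (s * q / 2)) / x * min (|z.re| ^ q) 1
      ≤ (1 + x ^ 2) ^ (s * q / 2) * |x| ^ (-q) * ‖z‖ ^ q := by
  rw [abs_of_pos (by linarith : 0 < x)]
  exact mul_le_mul (min_one_two_rpow_div_le_one_add_sq_rpow_mul_rpow_neg hsq hx)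
    ((min_le_left _ _).trans (Real.rpow_le_rpow (abs_nonneg _) (Complex.abs_re_le_norm _) hq))
    (le_min (by positivity) zero_le_one) (by positivity)

namespace IsStdComplexGaussianFamily

variable {Ω : Type*} [MeasurableSpace Ω] {P : Measure Ω} {g : ℤ → Ω → ℂ}

lemma map_re (hg : IsStdComplexGaussianFamily P g) (n : {n : ℤ // n ≠ 0}) :
    P.map (fun ω => (g n ω).re) = gaussianReal 0 1 :=
  hg.2 (n, true)

lemma aemeasurable_re (hg : IsStdComplexGaussianFamily P g) (n : {n : ℤ // n ≠ 0}) :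
    AEMeasurable (fun ω => (g n ω).re) P :=
  aemeasurable_of_map_neZero (by rw [hg.map_re n]; infer_instance)

lemma integral_comp_re (hg : IsStdComplexGaussianFamily P g) (n : {n : ℤ // n ≠ 0}) {f : ℝ → ℝ}
    (hf : Measurable f) : ∫ ω, f (g n ω).re ∂P = ∫ x, f x ∂gaussianReal 0 1 := by
  rw [← hg.map_re n, integral_map (hg.aemeasurable_re n) hf.aestronglyMeasurable]

lemma iIndepFun_re {ι : Type*} (hg : IsStdComplexGaussianFamily P g)
    {e : ι → {n : ℤ // n ≠ 0}} (he : e.Injective) :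
    iIndepFun (fun i ω => (g (e i) ω).re) P :=
  hg.1.precomp (g := fun i => (e i, true)) fun _ _ hij => he (congrArg Prod.fst hij)

end IsStdComplexGaussianFamily

theorem brownian_not_in_FourierLebesgue_general
    {Ω : Type*} [MeasurableSpace Ω] (P : Measure Ω)
    (g : ℤ → Ω → ℂ) (hg : IsStdComplexGaussianFamily P g)
    (q s : ℝ) (hq : 1 ≤ q) (hsq : -1 ≤ (s - 1) * q) :
    ∀ᵐ ω ∂P,
      (∑' n : {n : ℤ // n ≠ 0},
        ENNReal.ofReal
          ((1 + ((n : ℤ) : ℝ) ^ 2) ^ (s * q / 2) * |((n : ℤ) : ℝ)| ^ (-q)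
            * ‖g (n : ℤ) ω‖ ^ q)) = ⊤ := by
  let e : ℕ → {n : ℤ // n ≠ 0} := fun k => ⟨k + 1, by omega⟩
  have he : e.Injective := fun k l hkl => by simpa [e] using hkl
  set κ : ℝ := min 1 ((2 : ℝ) ^ (s * q / 2))
  have hκ : 0 < κ ∧ κ ≤ 1 := ⟨lt_min one_pos (by positivity), min_le_left _ _⟩
  set μ₀ : ℝ := ∫ x, min (|x| ^ q) 1 ∂gaussianReal 0 1
  have hμ₀ : 0 < μ₀ := integral_min_abs_rpow_one_pos
    (gaussianReal_absolutelyContinuous 0 one_ne_zero (measure_singleton 0)) q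
  let X : ℕ → Ω → ℝ := fun k ω => κ / (k + 1) * min (|(g (e k) ω).re| ^ q) 1
  have hmin_meas : Measurable fun x : ℝ => min (|x| ^ q) 1 := by fun_prop
  have hX_indep : iIndepFun X P :=
    (hg.iIndepFun_re he).comp (fun k x => κ / (k + 1) * min (|x| ^ q) 1) fun k =>
      hmin_meas.const_mul _
  have hX_mean : ∀ k : ℕ, P[X k] = κ * μ₀ * (1 / ((k : ℝ) + 1)) := fun k => by
    rw [integral_const_mul, hg.integral_comp_re (e k) hmin_meas]; ring
  have hX_le : ∀ k ω, X k ω ≤ (1 + ((e k : ℤ) : ℝ) ^ 2) ^ (s * q / 2)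
      * |((e k : ℤ) : ℝ)| ^ (-q) * ‖g (e k) ω‖ ^ q := fun k ω => by
    have hk : ((e k : ℤ) : ℝ) = k + 1 := by push_cast [e]; rfl
    rw [hk]
    exact div_mul_min_abs_re_rpow_le (by linarith) hsq (by simp) (g (e k) ω)
  filter_upwards [ae_tsum_ofReal_eq_top_of_iIndepFun hX_indep
    (fun k => (hmin_meas.const_mul _).comp_aemeasurable (hg.aemeasurable_re (e k)))
    (fun k ω => mul_nonneg (by positivity) (le_min (by positivity) zero_le_one))
    (fun k ω => mul_le_one₀ (div_le_one_of_le₀ (by linarith) (by positivity))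
      (le_min (by positivity) zero_le_one) (min_le_right _ _))
    (by simpa only [hX_mean, ← Finset.mul_sum] using
      Real.tendsto_sum_range_one_div_nat_succ_atTop.const_mul_atTop (mul_pos hκ.1 hμ₀))]
    with ω hω
  exact top_le_iff.1 <| hω ▸ (ENNReal.tsum_le_tsum fun k => ENNReal.ofReal_le_ofReal
    (hX_le k ω)).trans (ENNReal.tsum_comp_le_tsum_of_injective he _)

/-- If `1 ≤ q < ∞` and `(s-1)q ≥ -1`, then almost surely
`Σ_{n ≠ 0} ⟨n⟩^{sq} |n|^{-q} |gₙ|^q = ∞`, i.e. the Fourier–Wiener series a.s. does not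
belong to `𝓕L^{s,q}(𝕋) = M^{p,q}_s(𝕋)`. -/
theorem brownian_not_in_FourierLebesgue
    {Ω : Type*} [MeasurableSpace Ω] (P : Measure Ω) [IsProbabilityMeasure P]
    (g : ℤ → Ω → ℂ) (hg : IsStdComplexGaussianFamily P g)
    (q s : ℝ) (hq : 1 ≤ q) (hsq : -1 ≤ (s - 1) * q) :
    ∀ᵐ ω ∂P,
      (∑' n : {n : ℤ // n ≠ 0},
        ENNReal.ofReal
          ((1 + ((n : ℤ) : ℝ) ^ 2) ^ (s * q / 2) * |((n : ℤ) : ℝ)| ^ (-q)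
            * ‖g (n : ℤ) ω‖ ^ q)) = ⊤ :=
  brownian_not_in_FourierLebesgue_general P g hg q s hq hsq
end
end

section
/- Let s ≥ 1. Then almost surely sup_{n∈ℤ∖{0}} ⟨n⟩^{s} |n|^{−1} |g_n| = ∞; that is, the Fourier–Wiener series u almost surely does not belong to 𝓕L^{s,∞}(𝕋) (equivalently, to M^{p,∞}_s(𝕋) for any 1 ≤ p ≤ ∞). -/
/-!
Every real or imaginary part of a coefficient `gₙ` bounds `|gₙ|` from below, and since `s ≥ 1`
the weight `⟨n⟩^s |n|⁻¹` is at least `1`. So it suffices that the independent standard Gaussians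
`Re gₙ, Im gₙ` are a.s. unbounded above: for every level `M`, the event that `k` of them stay
below `M` has probability `P(N(0,1) ≤ M)^k → 0`.
-/

open MeasureTheory ProbabilityTheory Filter

noncomputable section

open scoped ENNReal NNReal

lemma gaussianReal_Iic_lt_one (μ : ℝ) {v : ℝ≥0} (hv : v ≠ 0) (M : ℝ) :
    gaussianReal μ v (Set.Iic M) < 1 := by
  have hIoi : gaussianReal μ v (Set.Ioi M) ≠ 0 :=
    mt (gaussianReal_absolutelyContinuous' μ hv ·) (by simp [Real.volume_Ioi])
  rw [← Set.compl_Ioi, prob_compl_eq_one_sub measurableSet_Ioi]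
  exact ENNReal.sub_lt_self ENNReal.one_ne_top one_ne_zero hIoi

lemma ProbabilityTheory.iIndepFun.measure_iInter_preimage_eq_zero {Ω ι β : Type*}
    [MeasurableSpace Ω] [MeasurableSpace β] [Infinite ι] {P : Measure Ω} {f : ι → Ω → β}
    (hf : iIndepFun f P) {A : Set β} (hA : MeasurableSet A) {p : ℝ≥0∞} (hp : p < 1)
    (hfA : ∀ i, P (f i ⁻¹' A) ≤ p) :
    P (⋂ i, f i ⁻¹' A) = 0 := by
  have hpow (k : ℕ) : P (⋂ i, f i ⁻¹' A) ≤ p ^ k := by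
    obtain ⟨S, hS⟩ := Infinite.exists_subset_card_eq ι k
    calc P (⋂ i, f i ⁻¹' A)
        ≤ P (⋂ i ∈ S, f i ⁻¹' A) :=
          measure_mono (Set.subset_iInter₂ fun i _ ↦ Set.iInter_subset _ i)
      _ = ∏ i ∈ S, P (f i ⁻¹' A) := hf.measure_inter_preimage_eq_mul S fun _ _ ↦ hA
      _ ≤ ∏ _i ∈ S, p := Finset.prod_le_prod' fun i _ ↦ hfA i
      _ = p ^ k := by rw [Finset.prod_const, hS]
  exact le_antisymm (ge_of_tendsto' (ENNReal.tendsto_pow_atTop_nhds_zero_of_lt_one hp) hpow)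
    zero_le

lemma abs_le_one_add_sq_rpow {x s : ℝ} (hs : 1 ≤ s) : |x| ≤ (1 + x ^ 2) ^ (s / 2) := by
  calc |x| = (x ^ 2) ^ (1 / 2 : ℝ) := by rw [← Real.sqrt_eq_rpow, Real.sqrt_sq_eq_abs]
    _ ≤ (1 + x ^ 2) ^ (1 / 2 : ℝ) := by gcongr; linarith
    _ ≤ (1 + x ^ 2) ^ (s / 2) := by gcongr; linarith [sq_nonneg x]

lemma one_le_one_add_sq_rpow_mul_abs_inv {x s : ℝ} (hx : x ≠ 0) (hs : 1 ≤ s) :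
    1 ≤ (1 + x ^ 2) ^ (s / 2) * |x|⁻¹ := by
  rw [← div_eq_mul_inv, one_le_div (abs_pos.2 hx)]
  exact abs_le_one_add_sq_rpow hs

instance : Infinite {n : ℤ // n ≠ 0} :=
  Set.infinite_coe_iff.2 (Set.finite_singleton 0).infinite_compl

namespace IsStdComplexGaussianFamily

variable {Ω : Type*} [MeasurableSpace Ω] {P : Measure Ω} {g : ℤ → Ω → ℂ}

lemma ae_forall_exists_lt_norm (hg : IsStdComplexGaussianFamily P g) :
    ∀ᵐ ω ∂P, ∀ M : ℕ, ∃ n : {n : ℤ // n ≠ 0}, (M : ℝ) < ‖g n ω‖ := by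
  set f : {n : ℤ // n ≠ 0} × Bool → Ω → ℝ := fun i ω ↦
    if i.2 then (g i.1 ω).re else (g i.1 ω).im
  have hindep : iIndepFun f P := hg.1
  have hlaw (i) : P.map (f i) = gaussianReal 0 1 := hg.2 i
  have hf_le_norm (i) (ω) : f i ω ≤ ‖g i.1 ω‖ := by
    simp only [f]
    split_ifs
    exacts [Complex.re_le_norm _, Complex.im_le_norm _]
  have hf_Iic (M : ℝ) (i) : P (f i ⁻¹' Set.Iic M) = gaussianReal 0 1 (Set.Iic M) := by
    have hmeas : AEMeasurable (f i) P :=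
      .of_map_ne_zero (by rw [hlaw i]; exact IsProbabilityMeasure.ne_zero _)
    rw [← Measure.map_apply_of_aemeasurable hmeas measurableSet_Iic, hlaw i]
  refine ae_all_iff.2 fun M ↦ ?_
  have hbounded : P (⋂ i, f i ⁻¹' Set.Iic (M : ℝ)) = 0 :=
    hindep.measure_iInter_preimage_eq_zero measurableSet_Iic
      (gaussianReal_Iic_lt_one 0 one_ne_zero M) fun i ↦ (hf_Iic M i).le
  filter_upwards [measure_eq_zero_iff_ae_notMem.1 hbounded] with ω hω
  simp only [Set.mem_iInter, Set.mem_preimage, Set.mem_Iic, not_forall, not_le] at hω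
  obtain ⟨i, hi⟩ := hω
  exact ⟨i.1, hi.trans_le (hf_le_norm i ω)⟩

end IsStdComplexGaussianFamily

theorem brownian_not_in_FourierLebesgue_qInfty_general
    {Ω : Type*} [MeasurableSpace Ω] (P : Measure Ω)
    (g : ℤ → Ω → ℂ) (hg : IsStdComplexGaussianFamily P g)
    (s : ℝ) (hs : 1 ≤ s) :
    ∀ᵐ ω ∂P,
      (⨆ n : {n : ℤ // n ≠ 0},
        ENNReal.ofReal
          ((1 + ((n : ℤ) : ℝ) ^ 2) ^ (s / 2) * |((n : ℤ) : ℝ)|⁻¹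
            * ‖g (n : ℤ) ω‖)) = ⊤ := by
  filter_upwards [hg.ae_forall_exists_lt_norm] with ω hω
  refine iSup_eq_top.2 fun b hb ↦ ?_
  obtain ⟨M, hbM⟩ := ENNReal.exists_nat_gt hb.ne
  obtain ⟨n, hMn⟩ := hω M
  refine ⟨n, hbM.trans_le ?_⟩
  rw [← ENNReal.ofReal_natCast]
  refine ENNReal.ofReal_le_ofReal (hMn.le.trans ?_)
  exact le_mul_of_one_le_left (norm_nonneg _)
    (one_le_one_add_sq_rpow_mul_abs_inv (Int.cast_ne_zero.2 n.2) hs)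

/-- If `s ≥ 1`, then almost surely `sup_{n ≠ 0} ⟨n⟩^s |n|⁻¹ |gₙ| = ∞`, i.e. the
Fourier–Wiener series a.s. does not belong to `𝓕L^{s,∞}(𝕋) = M^{p,∞}_s(𝕋)`. -/
theorem brownian_not_in_FourierLebesgue_qInfty
    {Ω : Type*} [MeasurableSpace Ω] (P : Measure Ω) [IsProbabilityMeasure P]
    (g : ℤ → Ω → ℂ) (hg : IsStdComplexGaussianFamily P g)
    (s : ℝ) (hs : 1 ≤ s) :
    ∀ᵐ ω ∂P,
      (⨆ n : {n : ℤ // n ≠ 0},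
        ENNReal.ofReal
          ((1 + ((n : ℤ) : ℝ) ^ 2) ^ (s / 2) * |((n : ℤ) : ℝ)|⁻¹
            * ‖g (n : ℤ) ω‖)) = ⊤ :=
  brownian_not_in_FourierLebesgue_qInfty_general P g hg s hs
end
end
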